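/- arXiv:1402.2636 — 5 statements merged into one kernel-verified Lean document; each statement's English description precedes it below -/
import Mathlib

section
/- For an n×n real matrix T and 1 ≤ k ≤ n, define D_k(T) as the supremum over all k-dimensional subspaces E of ℝⁿ of the ratio Vol_k(T(Bⁿ ∩ E))/Vol_k(Bⁿ ∩ E), where Bⁿ is the open unit Euclidean ball. Then for any n×n matrices A, B and any k, D_k(AB) ≤ D_k(A)·D_k(B). -/
open MeasureTheory
open Module Set Metric
open scoped ENNReal NNReal

noncomputable def isoE {n k : ℕ} (E : Submodule ℝ (EuclideanSpace ℝ (Fin n)))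
    (hE : finrank ℝ E = k) : E ≃ₗᵢ[ℝ] EuclideanSpace ℝ (Fin k) :=
  (stdOrthonormalBasis ℝ E).repr.trans
    (LinearIsometryEquiv.piLpCongrLeft 2 ℝ ℝ (finCongr hE))

lemma haarInst (k : ℕ) : (μH[(k:ℝ)] : Measure (EuclideanSpace ℝ (Fin k))).IsAddHaarMeasure := by
  have h : ((finrank ℝ (EuclideanSpace ℝ (Fin k)) : ℕ) : ℝ) = (k:ℝ) := by simp
  exact h ▸ isAddHaarMeasure_hausdorffMeasure

lemma val_image {n : ℕ} (k : ℕ) {E : Submodule ℝ (EuclideanSpace ℝ (Fin n))} (s : Set E) :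
    μH[(k:ℝ)] ((Subtype.val '' s : Set (EuclideanSpace ℝ (Fin n)))) = μH[(k:ℝ)] s :=
  (isometry_subtype_coe).hausdorffMeasure_image (Or.inl (by positivity)) s

lemma key {n k : ℕ} (T : EuclideanSpace ℝ (Fin n) →ₗ[ℝ] EuclideanSpace ℝ (Fin n))
    (E F : Submodule ℝ (EuclideanSpace ℝ (Fin n)))
    (hE : finrank ℝ E = k) (hF : finrank ℝ F = k) (hT : ∀ x ∈ E, T x ∈ F) :
    ∃ c : ℝ≥0∞, ∀ s : Set (EuclideanSpace ℝ (Fin n)), s ⊆ E →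
      μH[k] (T '' s) = c * μH[k] s := by
  haveI := haarInst k
  set e := isoE E hE
  set f := isoE F hF
  set T' : E →ₗ[ℝ] F := T.restrict hT with hT'
  set g : EuclideanSpace ℝ (Fin k) →ₗ[ℝ] EuclideanSpace ℝ (Fin k) :=
    (f.toLinearEquiv.toLinearMap.comp (T'.comp e.symm.toLinearEquiv.toLinearMap)) with hg
  refine ⟨ENNReal.ofReal |LinearMap.det g|, fun s hs => ?_⟩
  set s₀ : Set E := Subtype.val ⁻¹' s with hs₀def
  have hs₀ : Subtype.val '' s₀ = s := by
    apply Set.image_preimage_eq_of_subset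
    rwa [Subtype.range_coe]
  have h1 : T '' s = Subtype.val '' (f.symm '' (g '' (e '' s₀))) := by
    rw [← hs₀, Set.image_image, Set.image_image, Set.image_image, Set.image_image]
    apply Set.image_congr
    intro x _
    have : g (e x) = f (T' x) := by simp [hg]
    simp [this, hT', LinearMap.restrict_apply]
  rw [h1, val_image, f.symm.isometry.hausdorffMeasure_image (Or.inl (by positivity)),
    Measure.addHaar_image_linearMap, e.isometry.hausdorffMeasure_image (Or.inl (by positivity)),
    ← hs₀, val_image]

lemma ball_inter {n k : ℕ} (E : Submodule ℝ (EuclideanSpace ℝ (Fin n)))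
    (hE : finrank ℝ E = k) :
    μH[k] (ball (0 : EuclideanSpace ℝ (Fin n)) 1 ∩ (E : Set (EuclideanSpace ℝ (Fin n)))) ≠ 0 ∧
    μH[k] (ball (0 : EuclideanSpace ℝ (Fin n)) 1 ∩ (E : Set (EuclideanSpace ℝ (Fin n)))) ≠ ⊤ := by
  haveI := haarInst k
  have h1 : ball (0 : EuclideanSpace ℝ (Fin n)) 1 ∩ (E : Set (EuclideanSpace ℝ (Fin n)))
      = Subtype.val '' (ball (0 : E) 1) := by
    ext x
    constructor
    · rintro ⟨hx, hxE⟩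
      exact ⟨⟨x, hxE⟩, by simpa [mem_ball, dist_zero_right] using hx, rfl⟩
    · rintro ⟨y, hy, rfl⟩
      refine ⟨by simpa [mem_ball, dist_zero_right] using hy, y.2⟩
  set e := isoE E hE
  have h2 : (e '' (ball (0 : E) 1)) = ball (0 : EuclideanSpace ℝ (Fin k)) 1 := by
    have := e.toIsometryEquiv.image_ball (0 : E) 1
    simpa using this
  rw [h1, val_image k, ← e.isometry.hausdorffMeasure_image (Or.inl (by positivity)), h2]
  exact ⟨(measure_ball_pos _ _ one_pos).ne', measure_ball_lt_top.ne⟩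

lemma exists_super {n : ℕ} (d : ℕ) :
    ∀ F : Submodule ℝ (EuclideanSpace ℝ (Fin n)), finrank ℝ F + d ≤ n →
      ∃ F', F ≤ F' ∧ finrank ℝ F' = finrank ℝ F + d := by
  induction d with
  | zero => exact fun F _ => ⟨F, le_rfl, by simp⟩
  | succ d ih =>
    intro F hF
    have hV : finrank ℝ (EuclideanSpace ℝ (Fin n)) = n := finrank_euclideanSpace_fin
    have hlt : finrank ℝ F < finrank ℝ (EuclideanSpace ℝ (Fin n)) := by omega
    obtain ⟨x, hx⟩ : ∃ x, x ∉ F := by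
      by_contra h
      push_neg at h
      rw [Submodule.eq_top_iff'.mpr h, finrank_top] at hlt
      omega
    have hx0 : x ≠ 0 := fun h => hx (h ▸ F.zero_mem)
    have hdisj : Disjoint F (ℝ ∙ x) := (Submodule.disjoint_span_singleton' hx0).mpr hx
    have hrank : finrank ℝ ↥(F ⊔ ℝ ∙ x) = finrank ℝ F + 1 := by
      have h := Submodule.finrank_sup_add_finrank_inf_eq F (ℝ ∙ x)
      rw [hdisj.eq_bot, finrank_bot, finrank_span_singleton hx0] at h
      omega
    obtain ⟨F', hle, hfr⟩ := ih (F ⊔ ℝ ∙ x) (by omega)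
    exact ⟨F', le_trans le_sup_left hle, by omega⟩


/-- `Dk k T` is the maximal factor by which `T` can increase `k`-dimensional volumes:
the supremum over `k`-dimensional subspaces `E` of
`Vol_k(T(Bⁿ ∩ E)) / Vol_k(Bⁿ ∩ E)`, volumes measured by `k`-dimensional
Hausdorff measure. -/
noncomputable def Dk {n : ℕ} (k : ℕ)
    (T : EuclideanSpace ℝ (Fin n) →ₗ[ℝ] EuclideanSpace ℝ (Fin n)) : ENNReal :=
  ⨆ (E : Submodule ℝ (EuclideanSpace ℝ (Fin n))) (_ : Module.finrank ℝ E = k),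
    μH[k] (T '' (Metric.ball (0 : EuclideanSpace ℝ (Fin n)) 1 ∩ (E : Set (EuclideanSpace ℝ (Fin n))))) /
      μH[k] (Metric.ball (0 : EuclideanSpace ℝ (Fin n)) 1 ∩ (E : Set (EuclideanSpace ℝ (Fin n))))

lemma ratio_le_Dk {n k : ℕ} (T : EuclideanSpace ℝ (Fin n) →ₗ[ℝ] EuclideanSpace ℝ (Fin n))
    (E : Submodule ℝ (EuclideanSpace ℝ (Fin n))) (hE : finrank ℝ E = k) :
    μH[k] (T '' (ball (0 : EuclideanSpace ℝ (Fin n)) 1 ∩ (E : Set (EuclideanSpace ℝ (Fin n))))) /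
      μH[k] (ball (0 : EuclideanSpace ℝ (Fin n)) 1 ∩ (E : Set (EuclideanSpace ℝ (Fin n)))) ≤ Dk k T := by
  unfold Dk
  exact le_iSup₂ (f := fun (E : Submodule ℝ (EuclideanSpace ℝ (Fin n)))
    (_ : finrank ℝ E = k) =>
    μH[k] (T '' (ball (0 : EuclideanSpace ℝ (Fin n)) 1 ∩ (E : Set (EuclideanSpace ℝ (Fin n))))) /
      μH[k] (ball (0 : EuclideanSpace ℝ (Fin n)) 1 ∩ (E : Set (EuclideanSpace ℝ (Fin n))))) E hE

theorem stmt1 {n : ℕ} (k : ℕ) (hk1 : 1 ≤ k) (hkn : k ≤ n)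
    (A B : Matrix (Fin n) (Fin n) ℝ) :
    Dk k (Matrix.toEuclideanLin (A * B)) ≤
      Dk k (Matrix.toEuclideanLin A) * Dk k (Matrix.toEuclideanLin B) := by
  set LA := Matrix.toEuclideanLin A with hLA
  set LB := Matrix.toEuclideanLin B with hLB
  have hAB : Matrix.toEuclideanLin (A * B) = LA ∘ₗ LB := by
    apply LinearMap.ext
    intro x
    simp [hLA, hLB, Matrix.toEuclideanLin_apply, Matrix.mulVec_mulVec, LinearMap.comp_apply]
  rw [hAB]
  unfold Dk
  refine iSup₂_le fun E hE => ?_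
  -- intermediate subspaces
  have hmapB : finrank ℝ (Submodule.map LB E) ≤ k := hE ▸ Submodule.finrank_map_le LB E
  obtain ⟨F', hFle, hF'⟩ := exists_super (k - finrank ℝ (Submodule.map LB E))
    (Submodule.map LB E) (by omega)
  have hF'k : finrank ℝ F' = k := by omega
  have hmapA : finrank ℝ (Submodule.map LA F') ≤ k := hF'k ▸ Submodule.finrank_map_le LA F'
  obtain ⟨G', hGle, hG'⟩ := exists_super (k - finrank ℝ (Submodule.map LA F'))
    (Submodule.map LA F') (by omega)
  have hG'k : finrank ℝ G' = k := by omega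
  have hB : ∀ x ∈ E, LB x ∈ F' := fun x hx => hFle (Submodule.mem_map_of_mem hx)
  have hA : ∀ x ∈ F', LA x ∈ G' := fun x hx => hGle (Submodule.mem_map_of_mem hx)
  obtain ⟨cB, hcB⟩ := key LB E F' hE hF'k hB
  obtain ⟨cA, hcA⟩ := key LA F' G' hF'k hG'k hA
  obtain ⟨hm0, hmtop⟩ := ball_inter E hE
  obtain ⟨hm0', hmtop'⟩ := ball_inter F' hF'k
  have hSsub : ball (0 : EuclideanSpace ℝ (Fin n)) 1 ∩ (E : Set (EuclideanSpace ℝ (Fin n))) ⊆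
      (E : Set (EuclideanSpace ℝ (Fin n))) := inter_subset_right
  have hS'sub : ball (0 : EuclideanSpace ℝ (Fin n)) 1 ∩ (F' : Set (EuclideanSpace ℝ (Fin n))) ⊆
      (F' : Set (EuclideanSpace ℝ (Fin n))) := inter_subset_right
  have hBS : LB '' (ball (0 : EuclideanSpace ℝ (Fin n)) 1 ∩ (E : Set (EuclideanSpace ℝ (Fin n))))
      ⊆ (F' : Set (EuclideanSpace ℝ (Fin n))) := by
    rintro y ⟨x, hx, rfl⟩
    exact hB x (hSsub hx)
  have himg : (LA ∘ₗ LB) '' (ball (0 : EuclideanSpace ℝ (Fin n)) 1 ∩ (E : Set (EuclideanSpace ℝ (Fin n))))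
      = LA '' (LB '' (ball (0 : EuclideanSpace ℝ (Fin n)) 1 ∩ (E : Set (EuclideanSpace ℝ (Fin n))))) := by
    rw [LinearMap.coe_comp, Set.image_comp]
  have hval : μH[k] ((LA ∘ₗ LB) '' (ball (0 : EuclideanSpace ℝ (Fin n)) 1 ∩ (E : Set (EuclideanSpace ℝ (Fin n)))))
      = cA * (cB * μH[k] (ball (0 : EuclideanSpace ℝ (Fin n)) 1 ∩ (E : Set (EuclideanSpace ℝ (Fin n))))) := by
    rw [himg, hcA _ hBS, hcB _ hSsub]
  rw [hval]
  have hdiv : cA * (cB * μH[k] (ball (0 : EuclideanSpace ℝ (Fin n)) 1 ∩ (E : Set (EuclideanSpace ℝ (Fin n)))))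
      / μH[k] (ball (0 : EuclideanSpace ℝ (Fin n)) 1 ∩ (E : Set (EuclideanSpace ℝ (Fin n)))) = cA * cB := by
    refine ((ENNReal.eq_div_iff hm0 hmtop).mpr ?_).symm
    ring
  rw [hdiv]
  have hcBle : cB ≤ Dk k LB := by
    have h := hcB _ hSsub
    have hc : cB = μH[k] (LB '' (ball (0 : EuclideanSpace ℝ (Fin n)) 1 ∩ (E : Set (EuclideanSpace ℝ (Fin n)))))
        / μH[k] (ball (0 : EuclideanSpace ℝ (Fin n)) 1 ∩ (E : Set (EuclideanSpace ℝ (Fin n)))) :=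
      (ENNReal.eq_div_iff hm0 hmtop).mpr (by rw [h, mul_comm])
    rw [hc]
    exact ratio_le_Dk LB E hE
  have hcAle : cA ≤ Dk k LA := by
    have h := hcA _ hS'sub
    have hc : cA = μH[k] (LA '' (ball (0 : EuclideanSpace ℝ (Fin n)) 1 ∩ (F' : Set (EuclideanSpace ℝ (Fin n)))))
        / μH[k] (ball (0 : EuclideanSpace ℝ (Fin n)) 1 ∩ (F' : Set (EuclideanSpace ℝ (Fin n)))) :=
      (ENNReal.eq_div_iff hm0' hmtop').mpr (by rw [h, mul_comm])
    rw [hc]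
    exact ratio_le_Dk LA F' hF'k
  exact mul_le_mul' hcAle hcBle
end

section
/- If A is a symmetric positive-definite n×n real matrix with eigenvalues λ₁ ≥ λ₂ ≥ ... ≥ λₙ > 0, then D_k(A) = λ₁·λ₂···λ_k for each 1 ≤ k ≤ n, where D_k(A) is the supremum over k-dimensional subspaces E of Vol_k(A(Bⁿ ∩ E))/Vol_k(Bⁿ ∩ E). -/
/-!
Restricted to a `k`-dimensional subspace `E`, a linear map `T` scales `k`-dimensional Hausdorff
measure by its norm determinant, which equals `‖(⋀ᵏ T)(v₁ ∧ ⋯ ∧ vₖ)‖` for any orthonormal basis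
`v` of `E`. If `T` is diagonal in an orthonormal basis `e` with eigenvalues `λᵢ ≥ 0`, then `⋀ᵏ T`
is diagonal in the orthonormal basis `e_S = ∧_{i ∈ S} eᵢ` of `⋀ᵏ V` with eigenvalues
`∏_{i ∈ S} λᵢ`, so its operator norm is the largest of these products, `λ₁ ⋯ λₖ`; the span of
`e₁, …, eₖ` attains it.
-/

open MeasureTheory Matrix

open Module Submodule exteriorPower Finset

theorem Fin.val_le_of_strictMono {k n : ℕ} {f : Fin k → Fin n} (hf : StrictMono f) (j : Fin k) :
    (j : ℕ) ≤ f j := by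
  obtain ⟨j, hj⟩ := j
  induction j with
  | zero => exact Nat.zero_le _
  | succ j ih => exact (ih (by omega)).trans_lt (hf (Fin.mk_lt_mk.2 j.lt_succ_self))

theorem Finset.prod_comp_orderEmbOfFin {α M : Type*} [LinearOrder α] [CommMonoid M]
    (s : Finset α) {k : ℕ} (h : s.card = k) (f : α → M) :
    ∏ j, f (s.orderEmbOfFin h j) = ∏ i ∈ s, f i := by
  conv_rhs => rw [← s.map_orderEmbOfFin_univ h, prod_map]
  rfl

theorem Antitone.prod_le_prod_filter_val_lt {R : Type*} [CommMonoidWithZero R] [PartialOrder R]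
    [ZeroLEOneClass R] [PosMulMono R] {n k : ℕ} {f : Fin n → R} (hf : Antitone f)
    (hf0 : ∀ i, 0 ≤ f i) {s : Finset (Fin n)} (hs : s.card = k) :
    ∏ i ∈ s, f i ≤ ∏ i ∈ univ.filter (fun i : Fin n => (i : ℕ) < k), f i := by
  have hkn : k ≤ n := hs ▸ (card_le_univ s).trans_eq (Fintype.card_fin n)
  have ht : #{i : Fin n | (i : ℕ) < k} = k := by rw [Fin.card_filter_val_lt, min_eq_right hkn]
  have hinit : ⇑(orderEmbOfFin _ ht) = Fin.castLE hkn :=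
    (orderEmbOfFin_unique ht (fun j => by simp) (Fin.strictMono_castLE hkn)).symm
  rw [← prod_comp_orderEmbOfFin s hs, ← prod_comp_orderEmbOfFin _ ht, hinit]
  exact prod_le_prod (fun _ _ => hf0 _) fun j _ =>
    hf (Fin.le_def.2 (Fin.val_le_of_strictMono (s.orderEmbOfFin hs).strictMono j))

section DiagonalOperator

variable {ι F : Type*} [Fintype ι] [NormedAddCommGroup F] [InnerProductSpace ℝ F]
  (b : OrthonormalBasis ι ℝ F) {L : F →ₗ[ℝ] F} {c : ι → ℝ}

theorem OrthonormalBasis.repr_apply_of_apply_eq_smul (hL : ∀ i, L (b i) = c i • b i)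
    (x : F) (i : ι) : b.repr (L x) i = c i * b.repr x i := by
  classical
  conv_lhs => rw [← b.sum_repr x]
  simp [hL, b.repr_self, Pi.single_apply, mul_comm]

theorem OrthonormalBasis.norm_apply_le_of_apply_eq_smul (hL : ∀ i, L (b i) = c i • b i)
    {M : ℝ} (hM0 : 0 ≤ M) (hM : ∀ i, |c i| ≤ M) (x : F) : ‖L x‖ ≤ M * ‖x‖ := by
  rw [← b.repr.norm_map, ← b.repr.norm_map x]
  refine le_of_sq_le_sq ?_ (by positivity)
  rw [mul_pow, EuclideanSpace.norm_sq_eq, EuclideanSpace.norm_sq_eq, mul_sum]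
  gcongr with i
  rw [b.repr_apply_of_apply_eq_smul hL, norm_mul, mul_pow, Real.norm_eq_abs]
  gcongr
  exact hM i

end DiagonalOperator

theorem exteriorPower.map_ιMulti_family_of_apply_eq_smul {R M I : Type*} [CommRing R]
    [AddCommGroup M] [Module R M] [LinearOrder I] {T : M →ₗ[R] M} {e : I → M} {μ : I → R}
    (he : ∀ i, T (e i) = μ i • e i) {k : ℕ} (s : Set.powersetCard I k) :
    map k T (ιMulti_family R k e s) = (∏ i ∈ s.val, μ i) • ιMulti_family R k e s := by
  rw [ιMulti_family, map_apply_ιMulti, Set.powersetCard.ofFinEmbEquiv_symm_apply,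
    ← prod_comp_orderEmbOfFin, ← AlternatingMap.map_smul_univ]
  congr 1
  ext j
  exact he _

theorem Orthonormal.exists_orthonormalBasis_span {ι V : Type*} [Fintype ι] [NormedAddCommGroup V]
    [InnerProductSpace ℝ V] {v : ι → V} (hv : Orthonormal ℝ v) :
    ∃ b : OrthonormalBasis ι ℝ (span ℝ (Set.range v)),
      (span ℝ (Set.range v)).subtype ∘ b = v := by
  let b₀ := Basis.span hv.linearIndependent
  have hb₀ : (span ℝ (Set.range v)).subtypeₗᵢ ∘ b₀ = v :=
    funext fun i => by simp [b₀, Basis.span_apply]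
  refine ⟨b₀.toOrthonormalBasis (LinearIsometry.orthonormal_comp_iff _ |>.mp (hb₀ ▸ hv)), ?_⟩
  rw [Basis.coe_toOrthonormalBasis]
  exact hb₀

section ExteriorPower

variable {V : Type*} [NormedAddCommGroup V] [InnerProductSpace ℝ V] [FiniteDimensional ℝ V]

theorem exteriorPower.norm_ιMulti_sq {k : ℕ} (v : Fin k → V) :
    ‖ιMulti ℝ k v‖ ^ 2 = (Matrix.gram ℝ v).det := by
  rw [← real_inner_self_eq_norm_sq, inner_ιMulti_self]

theorem Orthonormal.norm_ιMulti {k : ℕ} {v : Fin k → V} (hv : Orthonormal ℝ v) :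
    ‖ιMulti ℝ k v‖ = 1 := by
  rw [← sq_eq_sq₀ (norm_nonneg _) zero_le_one, one_pow, norm_ιMulti_sq,
    Matrix.gram_eq_one_iff_orthonormal.mpr hv, Matrix.det_one]

theorem OrthonormalBasis.exteriorPower_apply {I : Type*} [Fintype I] [LinearOrder I]
    (e : OrthonormalBasis I ℝ V) (k : ℕ) (s : Set.powersetCard I k) :
    e.exteriorPower k s = ιMulti_family ℝ k e s := by
  simp [← OrthonormalBasis.coe_toBasis]

theorem exteriorPower.norm_map_le_of_apply_eq_smul {I : Type*} [Fintype I] [LinearOrder I]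
    (e : OrthonormalBasis I ℝ V) {T : V →ₗ[ℝ] V} {μ : I → ℝ} (he : ∀ i, T (e i) = μ i • e i)
    {k : ℕ} {M : ℝ} (hM0 : 0 ≤ M) (hM : ∀ s : Set.powersetCard I k, |∏ i ∈ s.val, μ i| ≤ M)
    (w : ⋀[ℝ]^k V) : ‖map k T w‖ ≤ M * ‖w‖ :=
  (e.exteriorPower k).norm_apply_le_of_apply_eq_smul
    (fun s => by rw [e.exteriorPower_apply, map_ιMulti_family_of_apply_eq_smul he]) hM0 hM w

theorem LinearMap.normDet_eq_norm_ιMulti {U : Type*} [NormedAddCommGroup U]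
    [InnerProductSpace ℝ U] [FiniteDimensional ℝ U] {k : ℕ} (f : U →ₗ[ℝ] V)
    (b : OrthonormalBasis (Fin k) ℝ U) : f.normDet = ‖ιMulti ℝ k (f ∘ b)‖ := by
  rw [← sq_eq_sq₀ f.normDet_nonneg (norm_nonneg _), norm_ιMulti_sq]
  exact f.normDet_sq_eq_det_gram b

theorem LinearMap.normDet_comp_subtype_span_eq_norm_map_ιMulti {k : ℕ} {v : Fin k → V}
    (hv : Orthonormal ℝ v) (T : V →ₗ[ℝ] V) :
    (T ∘ₗ (span ℝ (Set.range v)).subtype).normDet = ‖map k T (ιMulti ℝ k v)‖ := by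
  obtain ⟨b, hb⟩ := hv.exists_orthonormalBasis_span
  rw [normDet_eq_norm_ιMulti _ b, map_apply_ιMulti]
  conv_rhs => rw [← hb]
  rfl

theorem LinearMap.normDet_comp_subtype_le_of_apply_eq_smul {I : Type*} [Fintype I]
    [LinearOrder I] (e : OrthonormalBasis I ℝ V) {T : V →ₗ[ℝ] V} {μ : I → ℝ}
    (he : ∀ i, T (e i) = μ i • e i) {k : ℕ} {M : ℝ} (hM0 : 0 ≤ M)
    (hM : ∀ s : Set.powersetCard I k, |∏ i ∈ s.val, μ i| ≤ M) (E : Submodule ℝ V)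
    (hE : finrank ℝ E = k) : (T ∘ₗ E.subtype).normDet ≤ M := by
  let b := (stdOrthonormalBasis ℝ E).reindex (finCongr hE)
  have hb : Orthonormal ℝ (E.subtype ∘ b) := b.orthonormal.comp_linearIsometry E.subtypeₗᵢ
  calc (T ∘ₗ E.subtype).normDet = ‖map k T (ιMulti ℝ k (E.subtype ∘ b))‖ := by
        rw [normDet_eq_norm_ιMulti _ b, map_apply_ιMulti]; rfl
    _ ≤ M * ‖ιMulti ℝ k (E.subtype ∘ b)‖ := norm_map_le_of_apply_eq_smul e he hM0 hM _
    _ = M := by rw [hb.norm_ιMulti, mul_one]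

theorem LinearMap.exists_normDet_comp_subtype_eq_abs_prod {I : Type*} [Fintype I]
    [LinearOrder I] (e : OrthonormalBasis I ℝ V) {T : V →ₗ[ℝ] V} {μ : I → ℝ}
    (he : ∀ i, T (e i) = μ i • e i) {k : ℕ} (s : Set.powersetCard I k) :
    ∃ E : Submodule ℝ V, finrank ℝ E = k ∧ (T ∘ₗ E.subtype).normDet = |∏ i ∈ s.val, μ i| := by
  have hv : Orthonormal ℝ (e ∘ Set.powersetCard.ofFinEmbEquiv.symm s) :=
    e.orthonormal.comp _ (Set.powersetCard.ofFinEmbEquiv.symm s).injective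
  refine ⟨_, (finrank_span_eq_card hv.linearIndependent).trans (Fintype.card_fin k), ?_⟩
  rw [normDet_comp_subtype_span_eq_norm_map_ιMulti hv, ← ιMulti_family,
    map_ιMulti_family_of_apply_eq_smul he, norm_smul, Real.norm_eq_abs, ιMulti_family, hv.norm_ιMulti, mul_one]

end ExteriorPower

theorem LinearMap.hausdorffMeasure_image_ball_inter_div {V W : Type*} [NormedAddCommGroup V]
    [InnerProductSpace ℝ V] [FiniteDimensional ℝ V] [MeasurableSpace V] [BorelSpace V]
    [NormedAddCommGroup W] [InnerProductSpace ℝ W] [MeasurableSpace W] [BorelSpace W]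
    (T : V →ₗ[ℝ] W) (E : Submodule ℝ V) {k : ℕ} (hE : finrank ℝ E = k) :
    μH[k] (T '' (Metric.ball 0 1 ∩ (E : Set V))) / μH[k] (Metric.ball 0 1 ∩ (E : Set V))
      = ENNReal.ofReal (T ∘ₗ E.subtype).normDet := by
  subst hE
  have hball : Metric.ball 0 1 ∩ (E : Set V) = E.subtype '' Metric.ball 0 1 :=
    (Subtype.image_ball (0 : E) 1).symm
  have hpos : μH[finrank ℝ E] (Metric.ball (0 : E) 1) ≠ 0 :=
    (Metric.measure_ball_pos _ _ one_pos).ne'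
  have hfin : μH[finrank ℝ E] (Metric.ball (0 : E) 1) ≠ ⊤ := measure_ball_lt_top.ne
  rw [hball, ← Set.image_comp, ← LinearMap.coe_comp, LinearMap.hausdorffMeasure_image,
    LinearMap.hausdorffMeasure_image, LinearMap.normDet_subtype, ENNReal.ofReal_one, one_mul,
    ENNReal.mul_div_cancel_right hpos hfin]

theorem Dk_eq_iSup_normDet {n : ℕ} (k : ℕ)
    (T : EuclideanSpace ℝ (Fin n) →ₗ[ℝ] EuclideanSpace ℝ (Fin n)) :
    Dk k T = ⨆ (E : Submodule ℝ (EuclideanSpace ℝ (Fin n))) (_ : finrank ℝ E = k),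
      ENNReal.ofReal (T ∘ₗ E.subtype).normDet :=
  iSup_congr fun E => iSup_congr fun hE => T.hausdorffMeasure_image_ball_inter_div E hE

theorem Matrix.IsHermitian.toEuclideanLin_eigenvectorBasis {𝕜 n : Type*} [RCLike 𝕜] [Fintype n]
    [DecidableEq n] {A : Matrix n n 𝕜} (hA : A.IsHermitian) (i : n) :
    toEuclideanLin A (hA.eigenvectorBasis i) = hA.eigenvalues i • hA.eigenvectorBasis i := by
  ext j
  simpa using congrFun (hA.mulVec_eigenvectorBasis i) j

theorem stmt2_general {n : ℕ} (A : Matrix (Fin n) (Fin n) ℝ) (hA : A.PosDef)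
    (lam : Fin n → ℝ) (hanti : Antitone lam)
    (σ : Equiv.Perm (Fin n)) (hσ : ∀ i, lam i = hA.1.eigenvalues (σ i))
    (k : ℕ) (hkn : k ≤ n) :
    Dk k (Matrix.toEuclideanLin A) =
      ENNReal.ofReal (∏ i ∈ Finset.univ.filter (fun i : Fin n => (i : ℕ) < k), lam i) := by
  let e := hA.1.eigenvectorBasis.reindex σ.symm
  have he : ∀ i, Matrix.toEuclideanLin A (e i) = lam i • e i := fun i => by
    simp [e, hσ, hA.1.toEuclideanLin_eigenvectorBasis]
  have hlam : ∀ i, 0 ≤ lam i := fun i => hσ i ▸ (hA.eigenvalues_pos (σ i)).le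
  have htop : 0 ≤ ∏ i ∈ univ.filter (fun i : Fin n => (i : ℕ) < k), lam i :=
    prod_nonneg fun i _ => hlam i
  have hprod (s : Set.powersetCard (Fin n) k) :
      |∏ i ∈ s.val, lam i| ≤ ∏ i ∈ univ.filter (fun i : Fin n => (i : ℕ) < k), lam i := by
    rw [abs_of_nonneg (prod_nonneg fun i _ => hlam i)]
    exact hanti.prod_le_prod_filter_val_lt hlam s.2
  let s₀ : Set.powersetCard (Fin n) k :=
    ⟨_, Fin.card_filter_val_lt.trans (min_eq_right hkn)⟩
  obtain ⟨E₀, hE₀, hE₀normDet⟩ := LinearMap.exists_normDet_comp_subtype_eq_abs_prod e he s₀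
  rw [Dk_eq_iSup_normDet]
  refine le_antisymm (iSup₂_le fun E hE => ENNReal.ofReal_le_ofReal ?_) (le_iSup₂_of_le E₀ hE₀ ?_)
  · exact LinearMap.normDet_comp_subtype_le_of_apply_eq_smul e he htop hprod E hE
  · rw [hE₀normDet, abs_of_nonneg htop]

theorem stmt2 {n : ℕ} (A : Matrix (Fin n) (Fin n) ℝ) (hA : A.PosDef)
    (lam : Fin n → ℝ) (hanti : Antitone lam)
    (σ : Equiv.Perm (Fin n)) (hσ : ∀ i, lam i = hA.1.eigenvalues (σ i))
    (k : ℕ) (hk1 : 1 ≤ k) (hkn : k ≤ n) :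
    Dk k (Matrix.toEuclideanLin A) =
      ENNReal.ofReal (∏ i ∈ Finset.univ.filter (fun i : Fin n => (i : ℕ) < k), lam i) :=
  stmt2_general A hA lam hanti σ hσ k hkn
end

section
/- Let A be a symmetric positive-definite n×n matrix and B a symmetric n×n matrix. Then lim_{ε→0} dist²(A + εB, A)/ε² = Tr[(A^{-1}B)²], where dist(X,Y) = ‖log(X^{-1/2} Y X^{-1/2})‖_HS (the limit is taken over ε small enough that A + εB is positive-definite). -/
open Matrix Real

noncomputable def matFun {n : ℕ} (f : ℝ → ℝ) (A : Matrix (Fin n) (Fin n) ℝ) :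
    Matrix (Fin n) (Fin n) ℝ :=
  if hA : A.IsHermitian then
    (hA.eigenvectorUnitary : Matrix (Fin n) (Fin n) ℝ) *
      Matrix.diagonal (fun i => f (hA.eigenvalues i)) *
      (star (hA.eigenvectorUnitary : Matrix (Fin n) (Fin n) ℝ))
  else 0

/-- The logarithm of a positive-definite matrix, defined spectrally. -/
noncomputable def matLog {n : ℕ} (A : Matrix (Fin n) (Fin n) ℝ) :
    Matrix (Fin n) (Fin n) ℝ := matFun Real.log A

/-- The positive square root of a positive-definite matrix, defined spectrally. -/
noncomputable def matSqrt {n : ℕ} (A : Matrix (Fin n) (Fin n) ℝ) :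
    Matrix (Fin n) (Fin n) ℝ := matFun Real.sqrt A

/-- `A^{-1/2}` for a positive-definite matrix, defined spectrally. -/
noncomputable def matSqrtInv {n : ℕ} (A : Matrix (Fin n) (Fin n) ℝ) :
    Matrix (Fin n) (Fin n) ℝ := matFun (fun t => (Real.sqrt t)⁻¹) A

/-- The Hilbert–Schmidt (Frobenius) norm of a real square matrix. -/
noncomputable def hsNorm {n : ℕ} (T : Matrix (Fin n) (Fin n) ℝ) : ℝ :=
  Real.sqrt ((Tᵀ * T).trace)

/-- `dist(A,B) = ‖log (A^{-1/2} B A^{-1/2})‖_HS`. -/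
noncomputable def pdist {n : ℕ} (A B : Matrix (Fin n) (Fin n) ℝ) : ℝ :=
  hsNorm (matLog (matSqrtInv A * B * matSqrtInv A))

/-! With `S = A^{1/2}` and `C = A^{-1/2} B A^{-1/2}`, whose eigenvalues we call `νⱼ`, one has
`A + εB = S (1 + εC) S`. The matrix `X^{-1/2} A X^{-1/2}` with `X = A + εB` has the characteristic
polynomial of `A X⁻¹ = S (1 + εC)⁻¹ S⁻¹`, so its eigenvalues are the `(1 + ε νⱼ)⁻¹` and
`dist²(A + εB, A) = ∑ⱼ log² (1 + ε νⱼ)` once every `1 + ε νⱼ` is positive. Since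
`log² (1 + εν) / ε² → ν²`, the limit is `∑ⱼ νⱼ² = Tr[C²] = Tr[(A⁻¹B)²]`. -/

open Polynomial Filter Topology

namespace Matrix

variable {ι : Type*} [Fintype ι] [DecidableEq ι] {A : Matrix ι ι ℝ}

theorem IsHermitian.trace_cfc (hA : A.IsHermitian) (f : ℝ → ℝ) :
    (cfc f A).trace = ∑ i, f (hA.eigenvalues i) := by
  rw [hA.cfc_eq, IsHermitian.cfc, Unitary.conjStarAlgAut_apply, trace_mul_cycle,
    Unitary.coe_star_mul_self, one_mul, trace_diagonal]
  rfl

theorem IsHermitian.sum_eigenvalues_eq_of_charpoly_eq (hA : A.IsHermitian) {d : ι → ℝ}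
    (hd : A.charpoly = ∏ i, (X - C (d i))) (φ : ℝ → ℝ) :
    ∑ i, φ (hA.eigenvalues i) = ∑ i, φ (d i) := by
  have h := hA.roots_charpoly_eq_eigenvalues
  rw [hd, roots_prod _ _ (Finset.prod_ne_zero_iff.mpr fun i _ => X_sub_C_ne_zero (d i))] at h
  have hmap : Finset.univ.val.map hA.eigenvalues = Finset.univ.val.map d := by simpa using h.symm
  calc ∑ i, φ (hA.eigenvalues i) = ((Finset.univ.val.map hA.eigenvalues).map φ).sum := by
        rw [Multiset.map_map]; rfl
    _ = ∑ i, φ (d i) := by rw [hmap, Multiset.map_map]; rfl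

theorem PosDef.spectrum_subset_Ioi (hA : A.PosDef) : spectrum ℝ A ⊆ Set.Ioi 0 := by
  rw [hA.1.spectrum_real_eq_range_eigenvalues]
  rintro _ ⟨i, rfl⟩
  exact hA.eigenvalues_pos i

theorem charpoly_mul_mul_of_mul_eq_one {R : Type*} [CommRing R] {W W' : Matrix ι ι R}
    (h : W' * W = 1) (N : Matrix ι ι R) :
    (W * N * W').charpoly = N.charpoly := by
  rw [charpoly_mul_comm, ← mul_assoc, h, one_mul]

theorem IsHermitian.cfc_one_add_mul (hA : A.IsHermitian) (ε : ℝ) :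
    cfc (fun t => 1 + ε * t) A = 1 + ε • A := by
  rw [cfc_const_add _ _ _ (finite_real_spectrum.continuousOn _) hA.isSelfAdjoint,
    cfc_const_mul_id _ _ hA.isSelfAdjoint, map_one]

theorem IsHermitian.cfc_mul_cfc_inv (hA : A.IsHermitian) {f : ℝ → ℝ}
    (hf : ∀ i, f (hA.eigenvalues i) ≠ 0) : cfc f A * cfc (fun t => (f t)⁻¹) A = 1 := by
  rw [← cfc_mul _ _ _ (finite_real_spectrum.continuousOn _) (finite_real_spectrum.continuousOn _),
    ← cfc_const_one ℝ A hA.isSelfAdjoint]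
  refine cfc_congr fun t ht => mul_inv_cancel₀ ?_
  rw [hA.spectrum_real_eq_range_eigenvalues] at ht
  obtain ⟨i, rfl⟩ := ht
  exact hf i

theorem IsHermitian.posDef_cfc (hA : A.IsHermitian) {f : ℝ → ℝ}
    (hf : ∀ i, 0 < f (hA.eigenvalues i)) : (cfc f A).PosDef := by
  rw [hA.cfc_eq, IsHermitian.cfc, Unitary.conjStarAlgAut_apply,
    Unitary.isUnit_coe.posDef_star_right_conjugate_iff, posDef_diagonal_iff]
  exact hf

end Matrix

section MatrixFunctions

variable {n : ℕ} {A : Matrix (Fin n) (Fin n) ℝ}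

theorem matFun_eq_cfc (hA : A.IsHermitian) (f : ℝ → ℝ) : matFun f A = cfc f A := by
  rw [matFun, dif_pos hA, hA.cfc_eq, IsHermitian.cfc, Unitary.conjStarAlgAut_apply]
  rfl

theorem isHermitian_matFun (hA : A.IsHermitian) (f : ℝ → ℝ) : (matFun f A).IsHermitian := by
  rw [matFun_eq_cfc hA]
  exact cfc_predicate f A

theorem isHermitian_matSqrt (hA : A.IsHermitian) : (matSqrt A).IsHermitian :=
  isHermitian_matFun hA _

theorem isHermitian_matSqrtInv (hA : A.IsHermitian) : (matSqrtInv A).IsHermitian :=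
  isHermitian_matFun hA _

theorem matSqrt_mul_self (hA : A.PosDef) : matSqrt A * matSqrt A = A := by
  rw [matSqrt, matFun_eq_cfc hA.1, ← cfc_mul _ _ _ (finite_real_spectrum.continuousOn _)
    (finite_real_spectrum.continuousOn _)]
  conv_rhs => rw [← cfc_id' ℝ A hA.1.isSelfAdjoint]
  exact cfc_congr fun t ht => Real.mul_self_sqrt (hA.spectrum_subset_Ioi ht).le

theorem matSqrt_mul_matSqrtInv (hA : A.PosDef) : matSqrt A * matSqrtInv A = 1 := by
  rw [matSqrt, matSqrtInv, matFun_eq_cfc hA.1, matFun_eq_cfc hA.1]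
  exact hA.1.cfc_mul_cfc_inv fun i => (Real.sqrt_pos.mpr (hA.eigenvalues_pos i)).ne'

theorem matSqrtInv_mul_matSqrt (hA : A.PosDef) : matSqrtInv A * matSqrt A = 1 :=
  mul_eq_one_comm.mp (matSqrt_mul_matSqrtInv hA)

theorem inv_eq_matSqrtInv_mul_self (hA : A.PosDef) : A⁻¹ = matSqrtInv A * matSqrtInv A := by
  refine inv_eq_left_inv ?_
  calc matSqrtInv A * matSqrtInv A * A
      = matSqrtInv A * (matSqrtInv A * matSqrt A) * matSqrt A := by
        nth_rw 3 [← matSqrt_mul_self hA]; simp only [mul_assoc]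
    _ = 1 := by rw [matSqrtInv_mul_matSqrt hA, mul_one, matSqrtInv_mul_matSqrt hA]

theorem hsNorm_cfc_sq (hA : A.IsHermitian) (f : ℝ → ℝ) :
    hsNorm (cfc f A) ^ 2 = ∑ i, f (hA.eigenvalues i) ^ 2 := by
  have hT : (cfc f A)ᵀ = cfc f A := by
    rw [← conjTranspose_eq_transpose_of_trivial]; exact cfc_predicate f A
  have htr : ((cfc f A)ᵀ * cfc f A).trace = ∑ i, f (hA.eigenvalues i) ^ 2 := by
    rw [hT, ← cfc_mul _ _ _ (finite_real_spectrum.continuousOn _)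
      (finite_real_spectrum.continuousOn _), hA.trace_cfc]
    simp only [sq]
  rw [hsNorm, htr, Real.sq_sqrt (by positivity)]

theorem isHermitian_matSqrtInv_mul_mul (hA : A.IsHermitian) {B : Matrix (Fin n) (Fin n) ℝ}
    (hB : B.IsHermitian) : (matSqrtInv A * B * matSqrtInv A).IsHermitian := by
  have h := isHermitian_conjTranspose_mul_mul (matSqrtInv A) hB
  rwa [(isHermitian_matSqrtInv hA).eq] at h

end MatrixFunctions

section Perturbation

variable {n : ℕ} {A B : Matrix (Fin n) (Fin n) ℝ}

theorem pdist_sq_eq_sum_log_sq (hA : A.PosDef)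
    (hB : B.IsHermitian) {d : Fin n → ℝ} (hd : (B * A⁻¹).charpoly = ∏ i, (X - C (d i))) :
    pdist A B ^ 2 = ∑ i, Real.log (d i) ^ 2 := by
  have hM := isHermitian_matSqrtInv_mul_mul hA.1 hB
  have hMd : (matSqrtInv A * B * matSqrtInv A).charpoly = ∏ i, (X - C (d i)) := by
    rw [mul_assoc, charpoly_mul_comm, mul_assoc, ← inv_eq_matSqrtInv_mul_self hA, hd]
  rw [pdist, matLog, matFun_eq_cfc hM, hsNorm_cfc_sq hM]
  exact hM.sum_eigenvalues_eq_of_charpoly_eq hMd (fun t => Real.log t ^ 2)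

theorem add_smul_eq_matSqrt_mul_mul (hA : A.PosDef) (ε : ℝ) :
    A + ε • B = matSqrt A * (1 + ε • (matSqrtInv A * B * matSqrtInv A)) * matSqrt A := by
  simp only [mul_add, add_mul, mul_one, mul_smul_comm, smul_mul_assoc, ← mul_assoc,
    matSqrt_mul_matSqrtInv hA, one_mul, matSqrt_mul_self hA]
  rw [mul_assoc B, matSqrtInv_mul_matSqrt hA, mul_one]

theorem posDef_add_smul (hA : A.PosDef)
    (hC : (matSqrtInv A * B * matSqrtInv A).IsHermitian) {ε : ℝ}
    (hε : ∀ j, 0 < 1 + ε * hC.eigenvalues j) : (A + ε • B).PosDef := by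
  have h := (hC.posDef_cfc (f := fun t => 1 + ε * t) hε).conjTranspose_mul_mul_same
    (mulVec_injective_of_isUnit (IsUnit.of_mul_eq_one _ (matSqrt_mul_matSqrtInv hA)))
  rwa [(isHermitian_matSqrt hA.1).eq, hC.cfc_one_add_mul, ← add_smul_eq_matSqrt_mul_mul hA] at h

theorem inv_add_smul (hA : A.PosDef)
    (hC : (matSqrtInv A * B * matSqrtInv A).IsHermitian) {ε : ℝ}
    (hε : ∀ j, 1 + ε * hC.eigenvalues j ≠ 0) :
    (A + ε • B)⁻¹ =
      matSqrtInv A * cfc (fun t => (1 + ε * t)⁻¹) (matSqrtInv A * B * matSqrtInv A) *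
        matSqrtInv A := by
  refine inv_eq_right_inv ?_
  have hDD' := hC.cfc_mul_cfc_inv (f := fun t => 1 + ε * t) hε
  rw [add_smul_eq_matSqrt_mul_mul hA, ← hC.cfc_one_add_mul]
  generalize cfc (fun t => 1 + ε * t) (matSqrtInv A * B * matSqrtInv A) = D at hDD' ⊢
  generalize cfc (fun t => (1 + ε * t)⁻¹) (matSqrtInv A * B * matSqrtInv A) = D' at hDD' ⊢
  calc matSqrt A * D * matSqrt A * (matSqrtInv A * D' * matSqrtInv A)
      = matSqrt A * (D * (matSqrt A * matSqrtInv A) * D') * matSqrtInv A := by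
        simp only [mul_assoc]
    _ = 1 := by rw [matSqrt_mul_matSqrtInv hA, mul_one, hDD', mul_one, matSqrt_mul_matSqrtInv hA]

theorem charpoly_mul_inv_add_smul (hA : A.PosDef)
    (hC : (matSqrtInv A * B * matSqrtInv A).IsHermitian) {ε : ℝ}
    (hε : ∀ j, 1 + ε * hC.eigenvalues j ≠ 0) :
    (A * (A + ε • B)⁻¹).charpoly = ∏ j, (X - C ((1 + ε * hC.eigenvalues j)⁻¹)) := by
  have hA' : A * (A + ε • B)⁻¹ =
      matSqrt A * cfc (fun t => (1 + ε * t)⁻¹) (matSqrtInv A * B * matSqrtInv A) *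
        matSqrtInv A := by
    rw [inv_add_smul hA hC hε]
    generalize cfc (fun t => (1 + ε * t)⁻¹) (matSqrtInv A * B * matSqrtInv A) = D'
    calc A * (matSqrtInv A * D' * matSqrtInv A)
        = matSqrt A * (matSqrt A * matSqrtInv A) * D' * matSqrtInv A := by
          nth_rw 1 [← matSqrt_mul_self hA]; simp only [mul_assoc]
      _ = matSqrt A * D' * matSqrtInv A := by rw [matSqrt_mul_matSqrtInv hA, mul_one]
  rw [hA', charpoly_mul_mul_of_mul_eq_one (matSqrtInv_mul_matSqrt hA), hC.charpoly_cfc_eq]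
  rfl

theorem pdist_add_smul_sq (hA : A.PosDef)
    (hC : (matSqrtInv A * B * matSqrtInv A).IsHermitian) {ε : ℝ}
    (hε : ∀ j, 0 < 1 + ε * hC.eigenvalues j) :
    pdist (A + ε • B) A ^ 2 = ∑ j, Real.log (1 + ε * hC.eigenvalues j) ^ 2 := by
  rw [pdist_sq_eq_sum_log_sq (posDef_add_smul hA hC hε) hA.1
    (charpoly_mul_inv_add_smul hA hC fun j => (hε j).ne')]
  simp only [Real.log_inv, neg_sq]

theorem trace_inv_mul_sq (hA : A.PosDef)
    (hC : (matSqrtInv A * B * matSqrtInv A).IsHermitian) :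
    (A⁻¹ * B * (A⁻¹ * B)).trace = ∑ j, hC.eigenvalues j ^ 2 := by
  set C := matSqrtInv A * B * matSqrtInv A
  have hCC : (A⁻¹ * B * (A⁻¹ * B)).trace = (C * C).trace := by
    rw [inv_eq_matSqrtInv_mul_self hA]
    simp only [C, mul_assoc]
    rw [trace_mul_comm (matSqrtInv A)]
    simp only [mul_assoc]
  rw [hCC, ← cfc_id' ℝ C hC.isSelfAdjoint, ← cfc_mul _ _ _ (finite_real_spectrum.continuousOn _)
    (finite_real_spectrum.continuousOn _), hC.trace_cfc]
  simp only [sq]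

end Perturbation

theorem tendsto_log_one_add_mul_sq_div_sq (ν : ℝ) :
    Tendsto (fun ε : ℝ => Real.log (1 + ε * ν) ^ 2 / ε ^ 2) (𝓝[≠] 0) (𝓝 (ν ^ 2)) := by
  have hderiv : HasDerivAt (fun t : ℝ => Real.log (1 + t * ν)) ν 0 := by
    have h := ((hasDerivAt_id (0 : ℝ)).mul_const ν).const_add 1
    simpa using h.log (by simp)
  refine (hderiv.tendsto_slope_zero.pow 2).congr fun ε => ?_
  simp only [zero_add, zero_mul, add_zero, Real.log_one, sub_zero, smul_eq_mul]
  ring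

theorem stmt8 {n : ℕ} (A B : Matrix (Fin n) (Fin n) ℝ)
    (hA : A.PosDef) (hB : B.IsSymm) :
    Filter.Tendsto (fun ε : ℝ => (pdist (A + ε • B) A) ^ 2 / ε ^ 2)
      (nhdsWithin 0 {(0 : ℝ)}ᶜ)
      (nhds (((A⁻¹ * B) * (A⁻¹ * B)).trace)) := by
  have hC := isHermitian_matSqrtInv_mul_mul hA.1 (isHermitian_iff_isSymm.mpr hB)
  have hpos : ∀ᶠ ε in 𝓝[≠] (0 : ℝ), ∀ j, 0 < 1 + ε * hC.eigenvalues j :=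
    eventually_nhdsWithin_of_eventually_nhds <| eventually_all.2 fun j =>
      continuousAt_const.eventually_lt (by fun_prop) (by simp)
  rw [trace_inv_mul_sq hA hC]
  refine (tendsto_finsetSum _ fun j _ => tendsto_log_one_add_mul_sq_div_sq _).congr' ?_
  filter_upwards [hpos] with ε hε
  rw [pdist_add_smul_sq hA hC hε, Finset.sum_div]
end

section
/- Let Φ: ℝⁿ → ℝ be smooth with positive-definite Hessian everywhere, and let u: ℝⁿ → ℝ be smooth. Using Einstein summation with Φ^{ij} the entries of (D²Φ)^{-1}, Φ^{ijk} = Φ^{iℓ}Φ^{jm}Φ^{kr}Φ_{ℓmr}, and Φ^{ik}_ℓ = Φ^{im}Φ^{kr}Φ_{mrℓ}, the following pointwise inequality holds: Φ^{kℓ}Φ^{ij} u_{ik} u_{jℓ} − Φ^{ijk} u_{ij} u_k + (1/4) Φ^{ik}_ℓ Φ^{jℓ}_k u_i u_j ≥ 0. -/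
set_option maxHeartbeats 1000000

/-- First partial derivative `u_i` at `x`. -/
noncomputable def pd1 {n : ℕ} (u : (Fin n → ℝ) → ℝ) (x : Fin n → ℝ) (i : Fin n) : ℝ :=
  fderiv ℝ u x (Pi.single i 1)

/-- Second partial derivative `u_{ij}` at `x`. -/
noncomputable def pd2 {n : ℕ} (u : (Fin n → ℝ) → ℝ) (x : Fin n → ℝ) (i j : Fin n) : ℝ :=
  iteratedFDeriv ℝ 2 u x ![Pi.single i 1, Pi.single j 1]

/-- Third partial derivative `u_{ijk}` at `x`. -/
noncomputable def pd3 {n : ℕ} (u : (Fin n → ℝ) → ℝ) (x : Fin n → ℝ) (i j k : Fin n) : ℝ :=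
  iteratedFDeriv ℝ 3 u x ![Pi.single i 1, Pi.single j 1, Pi.single k 1]

section calc1
variable {n : ℕ} {f : (Fin n → ℝ) → ℝ}

lemma pd2_eq (f : (Fin n → ℝ) → ℝ) (x : Fin n → ℝ) (i j : Fin n) :
    pd2 f x i j = fderiv ℝ (fderiv ℝ f) x (Pi.single i 1) (Pi.single j 1) := by
  rw [pd2, iteratedFDeriv_two_apply]
  simp

lemma pd2_symm (hf : ContDiff ℝ (⊤ : ℕ∞) f) (x : Fin n → ℝ) (i j : Fin n) :
    pd2 f x i j = pd2 f x j i := by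
  rw [pd2_eq, pd2_eq]
  exact (hf.contDiffAt.isSymmSndFDerivAt (by rw [minSmoothness_of_isRCLikeNormedField]; exact WithTop.coe_le_coe.mpr le_top)) _ _

lemma pd3_eq (f : (Fin n → ℝ) → ℝ) (x : Fin n → ℝ) (i j k : Fin n) :
    pd3 f x i j k =
      fderiv ℝ (fderiv ℝ (fderiv ℝ f)) x (Pi.single i 1) (Pi.single j 1) (Pi.single k 1) := by
  rw [pd3]
  rw [show (iteratedFDeriv ℝ 3 f x) ![Pi.single i 1, Pi.single j 1, Pi.single k 1] =
      (iteratedFDeriv ℝ (2+1) f x : (Fin (2+1) → (Fin n → ℝ)) → ℝ)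
        ![Pi.single i 1, Pi.single j 1, Pi.single k 1] from rfl,
    iteratedFDeriv_succ_apply_right, iteratedFDeriv_two_apply]
  simp [Fin.init, Fin.last]

lemma pd3_symm12 (hf : ContDiff ℝ (⊤ : ℕ∞) f) (x : Fin n → ℝ) (i j k : Fin n) :
    pd3 f x i j k = pd3 f x j i k := by
  have hf1 : ContDiff ℝ (⊤ : ℕ∞) (fderiv ℝ f) := hf.fderiv_right (by simp)
  rw [pd3_eq, pd3_eq]
  rw [(hf1.contDiffAt.isSymmSndFDerivAt (by rw [minSmoothness_of_isRCLikeNormedField]; exact WithTop.coe_le_coe.mpr le_top)) (Pi.single i 1) (Pi.single j 1)]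

lemma pd3_symm23 (hf : ContDiff ℝ (⊤ : ℕ∞) f) (x : Fin n → ℝ) (i j k : Fin n) :
    pd3 f x i j k = pd3 f x i k j := by
  have hf1 : ContDiff ℝ (⊤ : ℕ∞) (fderiv ℝ f) := hf.fderiv_right (by simp)
  have hf2 : ContDiff ℝ (⊤ : ℕ∞) (fderiv ℝ (fderiv ℝ f)) := hf1.fderiv_right (by simp)
  have hd : Differentiable ℝ (fderiv ℝ (fderiv ℝ f)) := hf2.differentiable (by simp)
  have key : ∀ b c : Fin n → ℝ,
      fderiv ℝ (fun y => fderiv ℝ (fderiv ℝ f) y b c) x (Pi.single i 1) =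
        fderiv ℝ (fderiv ℝ (fderiv ℝ f)) x (Pi.single i 1) b c := by
    intro b c
    have L := (ContinuousLinearMap.apply ℝ ℝ c).comp
      (ContinuousLinearMap.apply ℝ ((Fin n → ℝ) →L[ℝ] ℝ) b)
    have h2 : fderiv ℝ (fun y => fderiv ℝ (fderiv ℝ f) y b c) x =
        (((ContinuousLinearMap.apply ℝ ℝ c).comp
      (ContinuousLinearMap.apply ℝ ((Fin n → ℝ) →L[ℝ] ℝ) b)).comp
        (fderiv ℝ (fderiv ℝ (fderiv ℝ f)) x)) := ContinuousLinearMap.ext fun v => by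
      rw [fderiv_clm_apply (by fun_prop) (by fun_prop), fderiv_clm_apply (hd x) (by fun_prop)]
      simp
    rw [h2]
    rfl
  have hsym : (fun y => fderiv ℝ (fderiv ℝ f) y (Pi.single j 1) (Pi.single k 1)) =
      (fun y => fderiv ℝ (fderiv ℝ f) y (Pi.single k 1) (Pi.single j 1)) := by
    funext y
    exact (hf.contDiffAt.isSymmSndFDerivAt (by rw [minSmoothness_of_isRCLikeNormedField]; exact WithTop.coe_le_coe.mpr le_top)) _ _
  rw [pd3_eq, pd3_eq, ← key, hsym, key]

end calc1


open Finset in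
theorem alg {n : ℕ} (A : Matrix (Fin n) (Fin n) ℝ) (hA : A.PosDef)
    (m : Fin n → Fin n → ℝ) (hm : ∀ i j, m i j = m j i)
    (t : Fin n → Fin n → Fin n → ℝ) (ht1 : ∀ i j k, t i j k = t j i k)
    (ht2 : ∀ i j k, t i j k = t i k j) (v : Fin n → ℝ) :
    0 ≤
      (∑ k, ∑ l, ∑ i, ∑ j, A k l * A i j * m i k * m j l)
      - (∑ i, ∑ j, ∑ k, (∑ l, ∑ m', ∑ r, A i l * A j m' * A k r * t l m' r) * m i j * v k)
      + (1 / 4) * ∑ i, ∑ j,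
          (∑ k, ∑ l, (∑ m', ∑ r, A i m' * A k r * t m' r l) *
            (∑ m', ∑ r, A j m' * A l r * t m' r k)) * v i * v j := by
  classical
  have hAs : ∀ i j, A i j = A j i := fun i j => by
    have := hA.1.apply j i; simpa using this
  have ht13 : ∀ i j k, t i j k = t k j i := by
    intro i j k; rw [ht1, ht2, ht1]
  set M : Matrix (Fin n) (Fin n) ℝ := Matrix.of m with hM
  set Q : Matrix (Fin n) (Fin n) ℝ :=
    Matrix.of (fun i j => ∑ p, ∑ q, A p q * v p * t q i j) with hQ
  set S : Matrix (Fin n) (Fin n) ℝ := M - (1/2 : ℝ) • Q with hS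
  -- generic trace expansion
  have trace4 : ∀ X Y : Matrix (Fin n) (Fin n) ℝ,
      Matrix.trace (X * A * Y * A) = ∑ i, ∑ l, ∑ k, ∑ j, X i j * A j k * Y k l * A l i := by
    intro X Y
    simp only [Matrix.trace, Matrix.diag, Matrix.mul_apply, Finset.sum_mul]
  -- symmetry of Q and S
  have hQs : Q.IsSymm := by
    apply Matrix.IsSymm.ext; intro i j
    simp only [hQ, Matrix.of_apply]
    exact Finset.sum_congr rfl fun p _ => Finset.sum_congr rfl fun q _ => by rw [ht2 q j i]
  have hMs : M.IsSymm := by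
    apply Matrix.IsSymm.ext; intro i j; simpa [hM] using hm j i
  have hSs : S.IsSymm := by
    rw [hS, Matrix.IsSymm, Matrix.transpose_sub, Matrix.transpose_smul, hQs.eq, hMs.eq]
  -- square root of A
  obtain ⟨R, hRs, hRR⟩ : ∃ R : Matrix (Fin n) (Fin n) ℝ, R.IsSymm ∧ R * R = A := by
    open scoped MatrixOrder in
    refine ⟨CFC.sqrt A, ?_, CFC.sqrt_mul_sqrt_self A hA.posSemidef.nonneg⟩
    open scoped MatrixOrder in
    have := (Matrix.nonneg_iff_posSemidef.mp (CFC.sqrt_nonneg A)).1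
    rw [Matrix.IsSymm]
    simpa [Matrix.IsSymm] using this
  -- positivity
  have hpos' : 0 ≤ Matrix.trace (S * A * S * A) := by
    set C : Matrix (Fin n) (Fin n) ℝ := R * S * R with hC
    have hCs : C.IsSymm := by
      rw [Matrix.IsSymm, hC, Matrix.transpose_mul, Matrix.transpose_mul, hRs.eq, hSs.eq,
        Matrix.mul_assoc]
    have e1 : S * A * S * A = (S * R) * (R * S * R * R) := by
      rw [← hRR]; noncomm_ring
    have e2 : C * C = (R * S * R * R) * (S * R) := by
      rw [hC]; noncomm_ring
    rw [e1, Matrix.trace_mul_comm, ← e2]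
    have e3 : Matrix.trace (C * C) = ∑ i, ∑ j, C i j * C j i := by
      simp only [Matrix.trace, Matrix.diag, Matrix.mul_apply]
    rw [e3]
    refine Finset.sum_nonneg fun i _ => Finset.sum_nonneg fun j _ => ?_
    have : C j i = C i j := by rw [← hCs.apply i j]
    rw [this]
    exact mul_self_nonneg _
  -- trace expansion of S*A*S*A
  have hQM : Matrix.trace (Q*A*M*A) = Matrix.trace (M*A*Q*A) := by
    rw [show Q*A*M*A = (Q*A)*(M*A) from by rw [Matrix.mul_assoc], Matrix.trace_mul_comm,
      ← Matrix.mul_assoc]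
  have expand : Matrix.trace (S*A*S*A) =
      Matrix.trace (M*A*M*A) - Matrix.trace (M*A*Q*A)
        + (1/4) * Matrix.trace (Q*A*Q*A) := by
    have h1 : S*A*S*A = M*A*M*A - (1/2:ℝ)•(Q*A*M*A) - (1/2:ℝ)•(M*A*Q*A)
        + ((1/2:ℝ)*(1/2:ℝ))•(Q*A*Q*A) := by
      rw [hS]
      simp only [Matrix.sub_mul, Matrix.smul_mul, Matrix.mul_sub, Matrix.mul_smul, smul_smul]
      module
    rw [h1]
    simp only [Matrix.trace_add, Matrix.trace_sub, Matrix.trace_smul, hQM, smul_eq_mul]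
    ring
  -- flattening lemmas
  have l4 : ∀ g : Fin n → Fin n → Fin n → Fin n → ℝ,
      (∑ i, ∑ j, ∑ k, ∑ l, g i j k l)
        = ∑ p : Fin n × Fin n × Fin n × Fin n, g p.1 p.2.1 p.2.2.1 p.2.2.2 := by
    intro g
    rw [Fintype.sum_prod_type]
    refine Finset.sum_congr rfl fun a _ => ?_
    rw [Fintype.sum_prod_type]
    refine Finset.sum_congr rfl fun b _ => ?_
    rw [Fintype.sum_prod_type]
  have step4 : ∀ (F G : Fin n → Fin n → Fin n → Fin n → ℝ)
      (e : (Fin n × Fin n × Fin n × Fin n) ≃ (Fin n × Fin n × Fin n × Fin n)),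
      (∀ p : Fin n × Fin n × Fin n × Fin n,
        F p.1 p.2.1 p.2.2.1 p.2.2.2 = G (e p).1 (e p).2.1 (e p).2.2.1 (e p).2.2.2) →
      (∑ i, ∑ j, ∑ k, ∑ l, F i j k l) = ∑ i, ∑ j, ∑ k, ∑ l, G i j k l := by
    intro F G e h
    rw [l4 F, l4 G]
    exact Fintype.sum_equiv e _ _ h
  have l6 : ∀ g : Fin n → Fin n → Fin n → Fin n → Fin n → Fin n → ℝ,
      (∑ i, ∑ j, ∑ k, ∑ l, ∑ a, ∑ b, g i j k l a b)
        = ∑ p : Fin n × Fin n × Fin n × Fin n × Fin n × Fin n,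
            g p.1 p.2.1 p.2.2.1 p.2.2.2.1 p.2.2.2.2.1 p.2.2.2.2.2 := by
    intro g
    rw [Fintype.sum_prod_type]
    refine Finset.sum_congr rfl fun a _ => ?_
    rw [Fintype.sum_prod_type]
    refine Finset.sum_congr rfl fun b _ => ?_
    exact (l4 _).trans (by rw [Fintype.sum_prod_type])
  have step6 : ∀ (F G : Fin n → Fin n → Fin n → Fin n → Fin n → Fin n → ℝ)
      (e : (Fin n × Fin n × Fin n × Fin n × Fin n × Fin n)
        ≃ (Fin n × Fin n × Fin n × Fin n × Fin n × Fin n)),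
      (∀ p : Fin n × Fin n × Fin n × Fin n × Fin n × Fin n,
        F p.1 p.2.1 p.2.2.1 p.2.2.2.1 p.2.2.2.2.1 p.2.2.2.2.2
          = G (e p).1 (e p).2.1 (e p).2.2.1 (e p).2.2.2.1 (e p).2.2.2.2.1 (e p).2.2.2.2.2) →
      (∑ i, ∑ j, ∑ k, ∑ l, ∑ a, ∑ b, F i j k l a b)
        = ∑ i, ∑ j, ∑ k, ∑ l, ∑ a, ∑ b, G i j k l a b := by
    intro F G e h
    rw [l6 F, l6 G]
    exact Fintype.sum_equiv e _ _ h
  have l8 : ∀ g : Fin n → Fin n → Fin n → Fin n → Fin n → Fin n → Fin n → Fin n → ℝ,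
      (∑ i, ∑ j, ∑ k, ∑ l, ∑ a, ∑ b, ∑ c, ∑ d, g i j k l a b c d)
        = ∑ p : Fin n × Fin n × Fin n × Fin n × Fin n × Fin n × Fin n × Fin n,
            g p.1 p.2.1 p.2.2.1 p.2.2.2.1 p.2.2.2.2.1 p.2.2.2.2.2.1
              p.2.2.2.2.2.2.1 p.2.2.2.2.2.2.2 := by
    intro g
    rw [Fintype.sum_prod_type]
    refine Finset.sum_congr rfl fun a _ => ?_
    rw [Fintype.sum_prod_type]
    refine Finset.sum_congr rfl fun b _ => ?_
    exact (l6 _).trans (by rw [Fintype.sum_prod_type])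
  have step8 : ∀ (F G : Fin n → Fin n → Fin n → Fin n → Fin n → Fin n → Fin n → Fin n → ℝ)
      (e : (Fin n × Fin n × Fin n × Fin n × Fin n × Fin n × Fin n × Fin n)
        ≃ (Fin n × Fin n × Fin n × Fin n × Fin n × Fin n × Fin n × Fin n)),
      (∀ p : Fin n × Fin n × Fin n × Fin n × Fin n × Fin n × Fin n × Fin n,
        F p.1 p.2.1 p.2.2.1 p.2.2.2.1 p.2.2.2.2.1 p.2.2.2.2.2.1 p.2.2.2.2.2.2.1
            p.2.2.2.2.2.2.2
          = G (e p).1 (e p).2.1 (e p).2.2.1 (e p).2.2.2.1 (e p).2.2.2.2.1 (e p).2.2.2.2.2.1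
              (e p).2.2.2.2.2.2.1 (e p).2.2.2.2.2.2.2) →
      (∑ i, ∑ j, ∑ k, ∑ l, ∑ a, ∑ b, ∑ c, ∑ d, F i j k l a b c d)
        = ∑ i, ∑ j, ∑ k, ∑ l, ∑ a, ∑ b, ∑ c, ∑ d, G i j k l a b c d := by
    intro F G e h
    rw [l8 F, l8 G]
    exact Fintype.sum_equiv e _ _ h
  -- identity 1
  have hid1 : Matrix.trace (M*A*M*A)
      = ∑ k, ∑ l, ∑ i, ∑ j, A k l * A i j * m i k * m j l := by
    rw [trace4]
    simp only [hM, Matrix.of_apply]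
    refine step4 _ _ ⟨fun p => (p.2.2.2, p.2.2.1, p.1, p.2.1),
      fun p => (p.2.2.1, p.2.2.2, p.2.1, p.1), fun p => rfl, fun p => rfl⟩ ?_
    rintro ⟨a, b, c, d⟩
    simp only [Equiv.coe_fn_mk]
    rw [hAs b a, hm c b]
    ring
  -- identity 2
  have hid2 : Matrix.trace (M*A*Q*A)
      = ∑ i, ∑ j, ∑ k, (∑ l, ∑ m', ∑ r, A i l * A j m' * A k r * t l m' r) * m i j * v k := by
    rw [trace4]
    simp only [hM, hQ, Matrix.of_apply, Finset.mul_sum, Finset.sum_mul]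
    refine step6 _ _ ⟨fun p => (p.1, p.2.2.2.1, p.2.2.2.2.1, p.2.1, p.2.2.1, p.2.2.2.2.2),
      fun p => (p.1, p.2.2.2.1, p.2.2.2.2.1, p.2.1, p.2.2.1, p.2.2.2.2.2),
      fun p => rfl, fun p => rfl⟩ ?_
    rintro ⟨a, b, c, d, e, f⟩
    simp only [Equiv.coe_fn_mk]
    rw [hAs b a, ht13 f c b]
    ring
  -- identity 3
  have hid3 : Matrix.trace (Q*A*Q*A)
      = ∑ i, ∑ j, (∑ k, ∑ l, (∑ m', ∑ r, A i m' * A k r * t m' r l) *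
          (∑ m', ∑ r, A j m' * A l r * t m' r k)) * v i * v j := by
    rw [trace4]
    simp only [hQ, Matrix.of_apply, Finset.mul_sum, Finset.sum_mul]
    refine step8 _ _
      ⟨fun p => (p.2.2.2.2.2.2.1, p.2.2.2.2.1, p.2.1, p.2.2.2.1, p.2.2.2.2.2.1, p.2.2.1,
          p.2.2.2.2.2.2.2, p.1),
        fun p => (p.2.2.2.2.2.2.2, p.2.2.1, p.2.2.2.2.2.1, p.2.2.2.1, p.2.1,
          p.2.2.2.2.1, p.1, p.2.2.2.2.2.2.1),
        fun p => rfl, fun p => rfl⟩ ?_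
    rintro ⟨a, b, c, d, e, f, g, h⟩
    simp only [Equiv.coe_fn_mk]
    ring
  -- conclusion
  rw [← hid1, ← hid2, ← hid3, ← expand]
  exact hpos'

theorem stmt14 {n : ℕ} (Φ u : (Fin n → ℝ) → ℝ)
    (hΦ : ContDiff ℝ (⊤ : ℕ∞) Φ) (hu : ContDiff ℝ (⊤ : ℕ∞) u)
    (hpos : ∀ x, (Matrix.of fun i j => pd2 Φ x i j).PosDef) (x : Fin n → ℝ) :
    0 ≤
      (∑ k, ∑ l, ∑ i, ∑ j,
          (Matrix.of fun a b => pd2 Φ x a b)⁻¹ k l * (Matrix.of fun a b => pd2 Φ x a b)⁻¹ i j *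
            pd2 u x i k * pd2 u x j l)
      - (∑ i, ∑ j, ∑ k,
          (∑ l, ∑ m, ∑ r,
              (Matrix.of fun a b => pd2 Φ x a b)⁻¹ i l * (Matrix.of fun a b => pd2 Φ x a b)⁻¹ j m *
                (Matrix.of fun a b => pd2 Φ x a b)⁻¹ k r * pd3 Φ x l m r) *
            pd2 u x i j * pd1 u x k)
      + (1 / 4) * ∑ i, ∑ j,
          (∑ k, ∑ l,
            (∑ m, ∑ r, (Matrix.of fun a b => pd2 Φ x a b)⁻¹ i m *
                (Matrix.of fun a b => pd2 Φ x a b)⁻¹ k r * pd3 Φ x m r l) *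
            (∑ m, ∑ r, (Matrix.of fun a b => pd2 Φ x a b)⁻¹ j m *
                (Matrix.of fun a b => pd2 Φ x a b)⁻¹ l r * pd3 Φ x m r k)) *
          pd1 u x i * pd1 u x j := by
  exact alg (Matrix.of fun a b => pd2 Φ x a b)⁻¹ ((hpos x).inv) (pd2 u x)
    (fun i j => pd2_symm hu x i j) (pd3 Φ x)
    (fun i j k => pd3_symm12 hΦ x i j k) (fun i j k => pd3_symm23 hΦ x i j k) (pd1 u x)
end

section
/- Let π be a Borel probability measure on ℝⁿ satisfying the Poincaré inequality Var_π[f] ≤ 4 ∫|∇f|² dπ for all locally Lipschitz f with finite right-hand side. Then there is a universal constant c > 0 such that for every 1-Lipschitz function f: ℝⁿ → ℝ, ∫ f dπ =: A is finite and ∫ exp(c|f − A|) dπ ≤ 2. -/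
open Metric

/-- The (upper) local Lipschitz slope
`|∇F|(x) = lim_{ε→0⁺} sup { |F(y)-F(z)| / dist(y,z) : y,z ∈ B(x,ε), y ≠ z }`,
valued in `ℝ≥0∞`. -/
noncomputable def gradNorm {X : Type*} [MetricSpace X] (F : X → ℝ) (x : X) : ENNReal :=
  ⨅ (ε : ℝ) (_ : 0 < ε),
    ⨆ (y : X) (_ : y ∈ ball x ε) (z : X) (_ : z ∈ ball x ε) (_ : y ≠ z),
      ENNReal.ofReal (|F y - F z| / dist y z)

open MeasureTheory

/-!
Let `m` be a median of the 1-Lipschitz function `f` and `a ≥ m`. The truncation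
`g = min ((f - a)⁺) h` is 1-Lipschitz with vanishing slope on the open set `{f < a}`, and
`∫ g ≤ h π{f > a} ≤ h / 2`, so the Poincaré inequality gives
`h² π{f ≥ a + h} ≤ Var g + (∫ g)² ≤ C π{f ≥ a} + h² π{f ≥ a} / 2`.
Iterating, the tails of `|f - m|` decay by the factor `1/2 + C/h² = 3/4` per step `h = 4`, which
yields a finite exponential moment of `|f - m|`. Convexity of `s ↦ e^{s x}` brings that moment close
to `1` at a smaller rate, and `|∫ f - m| ≤ ∫ |f - m|` moves the centre from the median to the mean.
-/

open Filter Set ProbabilityTheory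

section GradNorm

variable {X : Type*} [MetricSpace X] {F : X → ℝ}

lemma gradNorm_le_of_lipschitzWith {K : NNReal} (hF : LipschitzWith K F) (x : X) :
    gradNorm F x ≤ K := by
  refine (iInf₂_le 1 one_pos).trans <| iSup₂_le fun y _ => iSup₂_le fun z _ => iSup_le fun _ => ?_
  rw [← ENNReal.ofReal_coe_nnreal]
  refine ENNReal.ofReal_le_ofReal <| div_le_of_le_mul₀ dist_nonneg K.coe_nonneg ?_
  simpa [Real.dist_eq] using hF.dist_le_mul y z

lemma gradNorm_eq_zero_of_eqOn_ball {x : X} {ε c : ℝ} (hε : 0 < ε)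
    (hF : EqOn F (fun _ => c) (ball x ε)) : gradNorm F x = 0 := by
  refine le_antisymm ((iInf₂_le ε hε).trans ?_) zero_le
  refine iSup₂_le fun y hy => iSup₂_le fun z hz => iSup_le fun _ => ?_
  simp [hF hy, hF hz]

end GradNorm

lemma exists_measure_Ioi_le_half_and_measure_Iio_le_half (ν : Measure ℝ) [IsProbabilityMeasure ν] :
    ∃ m, ν (Ioi m) ≤ 1 / 2 ∧ ν (Iio m) ≤ 1 / 2 := by
  set F := cdf ν
  set S := {t | 1 / 2 ≤ F t}
  have hS : S.Nonempty :=
    ((tendsto_cdf_atTop ν).eventually (eventually_ge_nhds (by norm_num))).exists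
  have hSbdd : BddBelow S := by
    obtain ⟨b, hb⟩ := eventually_atBot.1
      ((tendsto_cdf_atBot ν).eventually (eventually_lt_nhds (by norm_num : (0 : ℝ) < 1 / 2)))
    exact ⟨b, fun t ht => le_of_not_gt fun htb => (hb t htb.le).not_ge ht⟩
  have half : ENNReal.ofReal (1 / 2) = 1 / 2 := by rw [ENNReal.ofReal_div_of_pos two_pos]; simp
  refine ⟨sInf S, ?_, ?_⟩
  · have hm : 1 / 2 ≤ F (sInf S) := by
      refine ge_of_tendsto ((F.right_continuous _).mono Ioi_subset_Ici_self) ?_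
      filter_upwards [self_mem_nhdsWithin] with t ht
      obtain ⟨s, hs, hst⟩ := (csInf_lt_iff hSbdd hS).1 ht
      exact hs.trans (F.mono hst.le)
    have hIic : 1 / 2 ≤ ν (Iic (sInf S)) := by
      rw [← ofReal_cdf, ← half]
      exact ENNReal.ofReal_le_ofReal hm
    rw [← compl_Iic, prob_compl_eq_one_sub measurableSet_Iic]
    calc 1 - ν (Iic (sInf S)) ≤ 1 - 1 / 2 := tsub_le_tsub_left hIic 1
      _ = 1 / 2 := by rw [one_div, ENNReal.one_sub_inv_two]
  · have hm : Function.leftLim F (sInf S) ≤ 1 / 2 := by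
      refine le_of_tendsto (F.mono.tendsto_leftLim _) ?_
      filter_upwards [self_mem_nhdsWithin] with t ht
      exact (not_le.1 (notMem_of_lt_csInf (s := S) ht hSbdd)).le
    rw [← measure_cdf ν, F.measure_Iio (tendsto_cdf_atBot ν), sub_zero, ← half]
    exact ENNReal.ofReal_le_ofReal hm

section Poincare

variable {X : Type*} [MetricSpace X] [MeasurableSpace X]

def PoincareInequality (π : Measure X) (C : ℝ) : Prop :=
  ∀ g : X → ℝ, LocallyLipschitz g → Integrable g π → Integrable (fun x => (g x) ^ 2) π →
    (∫⁻ x, (gradNorm g x) ^ 2 ∂π) ≠ ⊤ →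
    (∫ x, (g x) ^ 2 ∂π) - (∫ x, g x ∂π) ^ 2 ≤ C * (∫⁻ x, (gradNorm g x) ^ 2 ∂π).toReal

variable [OpensMeasurableSpace X] {π : Measure X}

lemma lintegral_gradNorm_sq_le {K : NNReal} {g : X → ℝ} (hg : LipschitzWith K g) {U : Set X}
    (hU : IsOpen U) {c : ℝ} (hgU : EqOn g (fun _ => c) U) :
    ∫⁻ x, gradNorm g x ^ 2 ∂π ≤ K ^ 2 * π Uᶜ := by
  rw [← lintegral_indicator_const hU.measurableSet.compl]
  refine lintegral_mono fun x => ?_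
  by_cases hx : x ∈ U
  · obtain ⟨ε, hε, hball⟩ := Metric.isOpen_iff.1 hU x hx
    simp [gradNorm_eq_zero_of_eqOn_ball hε (hgU.mono hball), hx]
  · rw [indicator_of_mem hx]
    exact pow_le_pow_left₀ zero_le (gradNorm_le_of_lipschitzWith hg x) 2

variable [IsProbabilityMeasure π] {f : X → ℝ} {C : ℝ}

lemma PoincareInequality.integral_sq_sub_sq_integral_le (hP : PoincareInequality π C)
    (hC : 0 ≤ C) {g : X → ℝ} (hg : LipschitzWith 1 g) (hg_int : Integrable g π)
    (hg2_int : Integrable (fun x => g x ^ 2) π) {U : Set X} (hU : IsOpen U) {c : ℝ}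
    (hgU : EqOn g (fun _ => c) U) :
    ∫ x, g x ^ 2 ∂π - (∫ x, g x ∂π) ^ 2 ≤ C * π.real Uᶜ := by
  have hgrad : ∫⁻ x, gradNorm g x ^ 2 ∂π ≤ π Uᶜ := by
    simpa using lintegral_gradNorm_sq_le hg hU hgU
  calc ∫ x, g x ^ 2 ∂π - (∫ x, g x ∂π) ^ 2
      ≤ C * (∫⁻ x, gradNorm g x ^ 2 ∂π).toReal :=
        hP g hg.locallyLipschitz hg_int hg2_int (ne_top_of_le_ne_top (measure_ne_top π _) hgrad)
    _ ≤ C * π.real Uᶜ :=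
        mul_le_mul_of_nonneg_left (ENNReal.toReal_mono (measure_ne_top π _) hgrad) hC

lemma PoincareInequality.measureReal_superlevel_add_le (hP : PoincareInequality π C)
    (hC : 0 ≤ C) (hf : LipschitzWith 1 f) {a h : ℝ} (hh : 0 < h) (ha : π {x | a < f x} ≤ 1 / 2) :
    π.real {x | a + h ≤ f x} ≤ (1 / 2 + C / h ^ 2) * π.real {x | a ≤ f x} := by
  set g : X → ℝ := fun x => min (max (f x - a) 0) h
  have hg : LipschitzWith 1 g := by
    simpa using ((hf.sub (LipschitzWith.const a)).max_const 0).min_const h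
  have hg_nonneg (x : X) : 0 ≤ g x := le_min (le_max_right _ _) hh.le
  have hg_le (x : X) : g x ≤ h := min_le_right _ _
  have hg_zero (x : X) (hx : f x ≤ a) : g x = 0 := by
    simp [g, max_eq_right (sub_nonpos.2 hx), hh.le]
  have hg_top (x : X) (hx : a + h ≤ f x) : g x = h := by
    simp [g, max_eq_left (show 0 ≤ f x - a by linarith), show h ≤ f x - a by linarith]
  have hg_int : Integrable g π := .of_bound hg.continuous.aestronglyMeasurable h
    (.of_forall fun x => by simp [abs_of_nonneg (hg_nonneg x), hg_le x])
  have hg2_int : Integrable (fun x => g x ^ 2) π :=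
    .of_bound (hg.continuous.pow 2).aestronglyMeasurable (h ^ 2)
      (.of_forall fun x => by simpa using pow_le_pow_left₀ (hg_nonneg x) (hg_le x) 2)
  have hvar : ∫ x, g x ^ 2 ∂π - (∫ x, g x ∂π) ^ 2 ≤ C * π.real {x | a ≤ f x} := by
    simpa [compl_ofPred] using hP.integral_sq_sub_sq_integral_le hC hg hg_int hg2_int
      (isOpen_lt hf.continuous continuous_const) (c := 0) fun x hx => hg_zero x (le_of_lt hx)
  have hmeas_ge (b : ℝ) : MeasurableSet {x | b ≤ f x} :=
    measurableSet_le measurable_const hf.continuous.measurable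
  have hmeas_gt : MeasurableSet {x | a < f x} :=
    measurableSet_lt measurable_const hf.continuous.measurable
  have hsq : h ^ 2 * π.real {x | a + h ≤ f x} ≤ ∫ x, g x ^ 2 ∂π := by
    rw [mul_comm, ← smul_eq_mul, ← integral_indicator_const _ (hmeas_ge _)]
    refine integral_mono ((integrable_const _).indicator (hmeas_ge _)) hg2_int fun x => ?_
    by_cases hx : a + h ≤ f x
    · simp [hx, hg_top x hx]
    · simp [hx, sq_nonneg]
  have hmean : ∫ x, g x ∂π ≤ h * π.real {x | a < f x} := by
    rw [mul_comm, ← smul_eq_mul, ← integral_indicator_const _ hmeas_gt]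
    refine integral_mono hg_int ((integrable_const _).indicator hmeas_gt) fun x => ?_
    by_cases hx : a < f x
    · simp [hx, hg_le x]
    · simp [hx, hg_zero x (not_lt.1 hx)]
  have hhalf : π.real {x | a < f x} ≤ 1 / 2 := by
    simpa [measureReal_def] using ENNReal.toReal_mono (by norm_num) ha
  have hlt_le : π.real {x | a < f x} ≤ π.real {x | a ≤ f x} :=
    measureReal_mono fun x (hx : a < f x) => hx.le
  have hp_nonneg : 0 ≤ π.real {x | a < f x} := measureReal_nonneg
  refine le_of_mul_le_mul_left ?_ (by positivity : 0 < h ^ 2)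
  calc h ^ 2 * π.real {x | a + h ≤ f x}
      ≤ (∫ x, g x ∂π) ^ 2 + C * π.real {x | a ≤ f x} := by linarith
    _ ≤ (h * π.real {x | a < f x}) ^ 2 + C * π.real {x | a ≤ f x} := by
        gcongr
    _ ≤ h ^ 2 * (π.real {x | a ≤ f x} / 2) + C * π.real {x | a ≤ f x} := by
        rw [mul_pow]; gcongr; nlinarith
    _ = h ^ 2 * ((1 / 2 + C / h ^ 2) * π.real {x | a ≤ f x}) := by field_simp

lemma PoincareInequality.measureReal_superlevel_add_mul_le_pow (hP : PoincareInequality π C)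
    (hC : 0 ≤ C) (hf : LipschitzWith 1 f) {a h : ℝ} (hh : 0 < h)
    (ha : π {x | a < f x} ≤ 1 / 2) (k : ℕ) :
    π.real {x | a + h * k ≤ f x} ≤ (1 / 2 + C / h ^ 2) ^ k := by
  induction k with
  | zero => simp
  | succ k ih =>
    have hk : π {x | a + h * k < f x} ≤ 1 / 2 :=
      (measure_mono fun x (hx : a + h * k < f x) =>
        show a < f x by nlinarith [(Nat.cast_nonneg k : (0 : ℝ) ≤ k)]).trans ha
    calc π.real {x | a + h * ↑(k + 1) ≤ f x} = π.real {x | a + h * k + h ≤ f x} := by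
          push_cast; ring_nf
      _ ≤ (1 / 2 + C / h ^ 2) * π.real {x | a + h * k ≤ f x} :=
          hP.measureReal_superlevel_add_le hC hf hh hk
      _ ≤ (1 / 2 + C / h ^ 2) * (1 / 2 + C / h ^ 2) ^ k :=
          mul_le_mul_of_nonneg_left ih (by positivity)
      _ = (1 / 2 + C / h ^ 2) ^ (k + 1) := (pow_succ' _ _).symm

lemma PoincareInequality.measureReal_abs_sub_superlevel_le (hP : PoincareInequality π C)
    (hC : 0 ≤ C) (hf : LipschitzWith 1 f) {m h : ℝ} (hh : 0 < h)
    (hm_gt : π {x | m < f x} ≤ 1 / 2) (hm_lt : π {x | f x < m} ≤ 1 / 2) (k : ℕ) :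
    π.real {x | h * k ≤ |f x - m|} ≤ 2 * (1 / 2 + C / h ^ 2) ^ k := by
  have hm_lt' : π {x | -m < -f x} ≤ 1 / 2 := by simpa using hm_lt
  calc π.real {x | h * k ≤ |f x - m|}
      ≤ π.real ({x | m + h * k ≤ f x} ∪ {x | -m + h * k ≤ -f x}) := by
        refine measureReal_mono fun x (hx : h * k ≤ |f x - m|) => ?_
        rcases le_abs'.1 hx with hx | hx
        · exact Or.inr (show -m + h * k ≤ -f x by linarith)
        · exact Or.inl (show m + h * k ≤ f x by linarith)
    _ ≤ π.real {x | m + h * k ≤ f x} + π.real {x | -m + h * k ≤ -f x} := measureReal_union_le _ _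
    _ ≤ 2 * (1 / 2 + C / h ^ 2) ^ k := by
        linarith [hP.measureReal_superlevel_add_mul_le_pow hC hf hh hm_gt k,
          hP.measureReal_superlevel_add_mul_le_pow (f := fun x => -f x) hC hf.neg hh hm_lt' k]

end Poincare

section ExponentialMoments

open Real

variable {Ω : Type*} [MeasurableSpace Ω] {μ : Measure Ω}

lemma lintegral_exp_mul_le_tsum {g : Ω → ℝ} (hg : Measurable g) (hg0 : ∀ x, 0 ≤ g x) {c h : ℝ}
    (hc : 0 ≤ c) (hh : 0 < h) :
    ∫⁻ x, ENNReal.ofReal (exp (c * g x)) ∂μ ≤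
      ∑' k : ℕ, ENNReal.ofReal (exp (c * (h * (k + 1)))) * μ {x | h * k ≤ g x} := by
  have hmeas : ∀ k : ℕ, MeasurableSet {x | h * k ≤ g x} :=
    fun k => measurableSet_le measurable_const hg
  simp_rw [← lintegral_indicator_const (hmeas _)]
  rw [← lintegral_tsum fun k => (measurable_const.indicator (hmeas k)).aemeasurable]
  refine lintegral_mono fun x => ?_
  set k := ⌊g x / h⌋₊
  have hk_le : h * k ≤ g x := (le_div_iff₀' hh).1 (Nat.floor_le (div_nonneg (hg0 x) hh.le))
  have hk_lt : g x < h * (k + 1) := (div_lt_iff₀' hh).1 (Nat.lt_floor_add_one _)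
  refine le_trans ?_ (ENNReal.le_tsum k)
  rw [indicator_of_mem (show x ∈ {x | h * k ≤ g x} from hk_le)]
  exact ENNReal.ofReal_le_ofReal (exp_le_exp.2 (mul_le_mul_of_nonneg_left hk_lt.le hc))

lemma integral_exp_mul_le_of_geometric_tail [IsFiniteMeasure μ] {g : Ω → ℝ} (hg : Measurable g)
    (hg0 : ∀ x, 0 ≤ g x) {c h B r q : ℝ} (hc : 0 ≤ c) (hh : 0 < h)
    (htail : ∀ k : ℕ, μ.real {x | h * k ≤ g x} ≤ B * r ^ k) (hr : 0 ≤ r)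
    (hq : exp (c * h) ≤ q) (hrq : r * q < 1) :
    Integrable (fun x => exp (c * g x)) μ ∧ ∫ x, exp (c * g x) ∂μ ≤ B * q / (1 - r * q) := by
  have hB : 0 ≤ B := by simpa using measureReal_nonneg.trans (htail 0)
  have hq0 : 0 ≤ q := (exp_pos _).le.trans hq
  have hterm : ∀ k : ℕ, exp (c * (h * (k + 1))) * μ.real {x | h * k ≤ g x} ≤
      B * q * (r * q) ^ k := fun k => by
    have : exp (c * (h * (k + 1))) ≤ q ^ (k + 1) := by
      rw [show c * (h * (k + 1)) = (k + 1 : ℕ) * (c * h) by push_cast; ring, exp_nat_mul]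
      exact pow_le_pow_left₀ (exp_pos _).le hq _
    calc exp (c * (h * (k + 1))) * μ.real {x | h * k ≤ g x} ≤ q ^ (k + 1) * (B * r ^ k) :=
          mul_le_mul this (htail k) measureReal_nonneg (by positivity)
      _ = B * q * (r * q) ^ k := by ring
  have hsum : HasSum (fun k : ℕ => B * q * (r * q) ^ k) (B * q / (1 - r * q)) := by
    simpa [div_eq_mul_inv] using
      (hasSum_geometric_of_lt_one (by positivity) hrq).mul_left (B * q)
  have hlint : ∫⁻ x, ENNReal.ofReal (exp (c * g x)) ∂μ ≤ ENNReal.ofReal (B * q / (1 - r * q)) := by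
    calc ∫⁻ x, ENNReal.ofReal (exp (c * g x)) ∂μ
        ≤ ∑' k : ℕ, ENNReal.ofReal (exp (c * (h * (k + 1)))) * μ {x | h * k ≤ g x} :=
          lintegral_exp_mul_le_tsum hg hg0 hc hh
      _ ≤ ∑' k : ℕ, ENNReal.ofReal (B * q * (r * q) ^ k) := ENNReal.tsum_le_tsum fun k => by
          rw [← ofReal_measureReal, ← ENNReal.ofReal_mul (exp_pos _).le]
          exact ENNReal.ofReal_le_ofReal (hterm k)
      _ = ENNReal.ofReal (B * q / (1 - r * q)) := by
          rw [← ENNReal.ofReal_tsum_of_nonneg (fun k => by positivity) hsum.summable, hsum.tsum_eq]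
  have hmeas : AEStronglyMeasurable (fun x => exp (c * g x)) μ :=
    (measurable_exp.comp (hg.const_mul c)).aestronglyMeasurable
  have hpos : 0 ≤ᵐ[μ] fun x => exp (c * g x) := Eventually.of_forall fun x => (exp_pos _).le
  have hint : Integrable (fun x => exp (c * g x)) μ :=
    (lintegral_ofReal_ne_top_iff_integrable hmeas hpos).1
      (ne_top_of_le_ne_top ENNReal.ofReal_ne_top hlint)
  refine ⟨hint, ?_⟩
  rw [integral_eq_lintegral_of_nonneg_ae hpos hmeas]
  exact ENNReal.toReal_le_of_le_ofReal (by positivity) hlint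

lemma exp_mul_le_one_sub_add_mul_exp {t : ℝ} (ht0 : 0 ≤ t) (ht1 : t ≤ 1) (x : ℝ) :
    exp (t * x) ≤ 1 - t + t * exp x := by
  simpa using convexOn_exp.2 (mem_univ 0) (mem_univ x) (sub_nonneg.2 ht1) ht0 (by ring)

lemma integral_exp_abs_sub_integral_le [IsProbabilityMeasure μ] {f : Ω → ℝ}
    (hf : AEStronglyMeasurable f μ) {m c M t : ℝ} (hc : 0 < c)
    (hint : Integrable (fun x => exp (c * |f x - m|)) μ)
    (hM : ∫ x, exp (c * |f x - m|) ∂μ ≤ M) (ht0 : 0 ≤ t) (ht1 : t ≤ 1) :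
    Integrable f μ ∧ ∫ x, exp (t * c * |f x - ∫ y, f y ∂μ|) ∂μ ≤ exp (t * M) * (1 + t * M) := by
  have habs : ∀ x, |f x - m| ≤ exp (c * |f x - m|) / c := fun x => by
    rw [le_div_iff₀' hc]; linarith [add_one_le_exp (c * |f x - m|)]
  have hfm : Integrable (fun x => f x - m) μ :=
    (hint.div_const c).mono' (hf.sub aestronglyMeasurable_const)
      (Eventually.of_forall fun x => by simpa [Real.norm_eq_abs] using habs x)
  have hf_int : Integrable f μ := by
    refine (hfm.add (integrable_const m)).congr (Eventually.of_forall fun x => ?_)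
    simp
  refine ⟨hf_int, ?_⟩
  set A := ∫ y, f y ∂μ
  have hA : c * |A - m| ≤ M := by
    rw [← le_div_iff₀' hc]
    calc |A - m| = |∫ x, (f x - m) ∂μ| := by simp [integral_sub hf_int (integrable_const m), A]
      _ ≤ ∫ x, |f x - m| ∂μ := abs_integral_le_integral_abs
      _ ≤ ∫ x, exp (c * |f x - m|) / c ∂μ := integral_mono hfm.abs (hint.div_const c) habs
      _ ≤ M / c := by rw [integral_div]; gcongr
  have hpt : ∀ x, exp (t * c * |f x - A|) ≤
      exp (t * M) * (1 - t + t * exp (c * |f x - m|)) := fun x => by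
    have htri : |f x - A| ≤ |f x - m| + |A - m| := by
      simpa [abs_sub_comm A m] using abs_sub_le (f x) m A
    calc exp (t * c * |f x - A|) ≤ exp (t * (c * |A - m|) + t * (c * |f x - m|)) := by
          gcongr; nlinarith [mul_nonneg ht0 hc.le]
      _ = exp (t * (c * |A - m|)) * exp (t * (c * |f x - m|)) := exp_add _ _
      _ ≤ exp (t * M) * (1 - t + t * exp (c * |f x - m|)) := by
          gcongr
          exact exp_mul_le_one_sub_add_mul_exp ht0 ht1 _
  calc ∫ x, exp (t * c * |f x - A|) ∂μ
      ≤ ∫ x, exp (t * M) * (1 - t + t * exp (c * |f x - m|)) ∂μ :=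
        integral_mono_of_nonneg (Eventually.of_forall fun x => (exp_pos _).le)
          (((integrable_const _).add (hint.const_mul t)).const_mul _) (Eventually.of_forall hpt)
    _ = exp (t * M) * (1 - t + t * ∫ x, exp (c * |f x - m|) ∂μ) := by
        rw [integral_const_mul, integral_add (integrable_const _) (hint.const_mul t),
          integral_const_mul]
        simp
    _ ≤ exp (t * M) * (1 + t * M) := by gcongr; nlinarith

end ExponentialMoments

/-- Gromov–Milman: a Poincaré inequality with constant 4 implies exponential concentration of
Lipschitz functions, with a universal constant `c > 0`. -/
theorem stmt19 :
    ∃ c : ℝ, 0 < c ∧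
      ∀ (n : ℕ) (π : Measure (EuclideanSpace ℝ (Fin n))), IsProbabilityMeasure π →
        (∀ f : EuclideanSpace ℝ (Fin n) → ℝ, LocallyLipschitz f →
          Integrable f π → Integrable (fun x => (f x) ^ 2) π →
          (∫⁻ x, (gradNorm f x) ^ 2 ∂π) ≠ ⊤ →
          (∫ x, (f x) ^ 2 ∂π) - (∫ x, f x ∂π) ^ 2 ≤
            4 * (∫⁻ x, (gradNorm f x) ^ 2 ∂π).toReal) →
        ∀ f : EuclideanSpace ℝ (Fin n) → ℝ, LipschitzWith 1 f →
          Integrable f π ∧ ∫ x, Real.exp (c * |f x - ∫ y, f y ∂π|) ∂π ≤ 2 := by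
  refine ⟨3 / 160 * (1 / 40), by norm_num, fun n π _ hP f hf => ?_⟩
  have hfm := hf.continuous.measurable
  have := Measure.isProbabilityMeasure_map (μ := π) hfm.aemeasurable
  obtain ⟨m, hm_gt, hm_lt⟩ := exists_measure_Ioi_le_half_and_measure_Iio_le_half (π.map f)
  rw [Measure.map_apply hfm measurableSet_Ioi] at hm_gt
  rw [Measure.map_apply hfm measurableSet_Iio] at hm_lt
  have htail (k : ℕ) : π.real {x | 4 * k ≤ |f x - m|} ≤ 2 * (3 / 4) ^ k := by
    convert (show PoincareInequality π 4 from hP).measureReal_abs_sub_superlevel_le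
      (by norm_num) hf four_pos hm_gt hm_lt k using 3
    norm_num
  -- At rate `1/40`, layers of width `4` grow by `e^{1/10} ≤ 10/9`, so the moment is at most
  -- `M = 2 · (10/9) / (1 - (3/4)(10/9)) = 40/3`; the fraction `t = 3/160` of that rate gives
  -- `t M = 1/4`.
  have hstep : Real.exp (1 / 40 * 4) ≤ 10 / 9 :=
    (Real.exp_bound_div_one_sub_of_interval (by norm_num) (by norm_num)).trans_eq (by norm_num)
  obtain ⟨hint, hM⟩ := integral_exp_mul_le_of_geometric_tail (hfm.sub_const m).abs
    (fun x => abs_nonneg _) (by norm_num) four_pos htail (by norm_num) hstep (by norm_num)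
  obtain ⟨hf_int, hbound⟩ := integral_exp_abs_sub_integral_le hfm.aestronglyMeasurable
    (by norm_num) hint hM (t := 3 / 160) (by norm_num) (by norm_num)
  refine ⟨hf_int, hbound.trans ?_⟩
  have hquarter : Real.exp (1 / 4) ≤ 4 / 3 :=
    (Real.exp_bound_div_one_sub_of_interval (by norm_num) (by norm_num)).trans_eq (by norm_num)
  calc _ = Real.exp (1 / 4) * (5 / 4) := by norm_num
    _ ≤ 4 / 3 * (5 / 4) := by gcongr
    _ ≤ 2 := by norm_num
end
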